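/- NFD is a monotone algorithm for Variable-Sized Bin Covering with unit supply: if (I,J) and (I,J') are instances with J ⊇ J', then NFD(I,J) ≥ NFD(I,J'). -/

import Mathlib

open scoped Classical

noncomputable section

namespace BinCov

/-- Profit of a solution `S` on the bin set `B`: a bin `i ∈ B` earns profit `p i`
if the total size of the items assigned to it is at least its demand `d i`. -/
def profit (d p s : ℕ → ℝ) (B : Finset ℕ) (S : ℕ → Finset ℕ) : ℝ :=
  ∑ i ∈ B, if d i ≤ ∑ j ∈ S i, s j then p i else 0

/-- A solution assigns pairwise disjoint subsets of the item set `T` to the bins. -/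
def IsSolution (T : Finset ℕ) (S : ℕ → Finset ℕ) : Prop :=
  (∀ i, S i ⊆ T) ∧ Pairwise fun i i' => Disjoint (S i) (S i')

/-- Optimal profit over all solutions on bins `B` and items `T`. -/
def OPT (d p s : ℕ → ℝ) (B T : Finset ℕ) : ℝ :=
  sSup (profit d p s B '' {S | IsSolution T S})

/-- Take a minimal prefix of `items` whose total size reaches `dem`;
returns this prefix together with the remaining items. -/
def takeFill (s : ℕ → ℝ) : ℝ → List ℕ → List ℕ × List ℕ
  | _, [] => ([], [])
  | dem, j :: rest =>
    if dem ≤ s j then ([j], rest)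
    else
      let q := takeFill s (dem - s j) rest
      (j :: q.1, q.2)

/-- Next Fit Decreasing on the list `bins` of bins and the list `items` of still
unassigned items (both by index, i.e. in non-increasing order of demand resp. size):
if the unassigned items cannot cover the current bin, it is left empty; otherwise a
minimal prefix of the unassigned items is assigned to it.  Returns, for each bin,
the set of items assigned to it. -/
def nfdAux (d s : ℕ → ℝ) : List ℕ → List ℕ → ℕ → Finset ℕ
  | [], _, _ => ∅
  | i :: bins, items, b =>
    if d i ≤ (items.map s).sum then
      let q := takeFill s (d i) items
      if b = i then q.1.toFinset else nfdAux d s bins q.2 b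
    else
      if b = i then ∅ else nfdAux d s bins items b

/-- The solution produced by NFD on bin set `B` and item set `T` (bins and items are
processed in increasing order of index; demands and sizes are non-increasing in the index). -/
def nfdSol (d s : ℕ → ℝ) (B T : Finset ℕ) : ℕ → Finset ℕ :=
  nfdAux d s (B.sort (· ≤ ·)) (T.sort (· ≤ ·))

/-- The total size `u i` that NFD assigns to bin `i`. -/
def nfdU (d s : ℕ → ℝ) (B T : Finset ℕ) (i : ℕ) : ℝ :=
  ∑ j ∈ nfdSol d s B T i, s j

/-- The profit NFD earns (Variable-Sized Bin Covering: the profit of a bin is its demand). -/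
def NFD (d s : ℕ → ℝ) (B T : Finset ℕ) : ℝ :=
  profit d d s B (nfdSol d s B T)

/-- A bin `istar` with `u istar > 0` in NFD's solution (bins `0,…,m-1`, items `T`) is
well-covered if for the smallest index `i' > istar` with `u i' = 0` (which must exist)
one has `u i ≤ 2 * d i` for all bins `i ≤ i'`. -/
def WellCovered (d s : ℕ → ℝ) (m : ℕ) (T : Finset ℕ) (istar : ℕ) : Prop :=
  istar < m ∧ 0 < nfdU d s (Finset.range m) T istar ∧
    ∃ i', istar < i' ∧ i' < m ∧ nfdU d s (Finset.range m) T i' = 0 ∧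
      (∀ i, istar < i → i < i' → nfdU d s (Finset.range m) T i ≠ 0) ∧
      ∀ i ≤ i', nfdU d s (Finset.range m) T i ≤ 2 * d i

/-- `istar` is the head of the instance: letting `i0` be the smallest index of a non-empty
bin of NFD's solution that is not well-covered, and `i1 ≥ i0` the smallest index with
`u (i1+1) = 0`, the head is the largest index `istar ≤ i1` with `u istar > 2 * d istar`. -/
def IsHead (d s : ℕ → ℝ) (m : ℕ) (T : Finset ℕ) (istar : ℕ) : Prop :=
  ∃ i0 i1,
    i0 < m ∧ 0 < nfdU d s (Finset.range m) T i0 ∧ ¬ WellCovered d s m T i0 ∧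
    (∀ i < i0, 0 < nfdU d s (Finset.range m) T i → WellCovered d s m T i) ∧
    i0 ≤ i1 ∧ nfdU d s (Finset.range m) T (i1 + 1) = 0 ∧
    (∀ i, i0 ≤ i → i < i1 → nfdU d s (Finset.range m) T (i + 1) ≠ 0) ∧
    istar ≤ i1 ∧ 2 * d istar < nfdU d s (Finset.range m) T istar ∧
    (∀ i ≤ i1, 2 * d i < nfdU d s (Finset.range m) T i → i ≤ istar)

/-- The inner loop of `ALG*` on one bin: `dcap` is the bin's demand (items are admissible iff
their size is at most `dcap`), `space` is the part of the demand not yet covered, and `rem j`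
is the still unassigned part of item `j` (items `0,…,n-1`, sizes non-increasing in the index).
While the bin is not covered and some admissible item is not fully assigned, the largest such
item (i.e. the one of smallest index) is taken and its remaining part is assigned to the bin,
splitting it so that the bin is exactly covered if it would overflow.
Returns the updated remainders together with the total amount assigned to the bin. -/
def fillBin (s : ℕ → ℝ) (n : ℕ) (dcap : ℝ) : ℕ → ℝ → (ℕ → ℝ) → (ℕ → ℝ) × ℝ
  | 0, _, rem => (rem, 0)
  | fuel + 1, space, rem =>
    if h : ∃ j, j < n ∧ s j ≤ dcap ∧ 0 < rem j then
      let j := Nat.find h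
      if rem j ≤ space then
        let q := fillBin s n dcap fuel (space - rem j) (Function.update rem j 0)
        (q.1, q.2 + rem j)
      else
        (Function.update rem j (rem j - space), space)
    else (rem, 0)

/-- The outer loop of `ALG*`: the bins are processed in the given order (non-increasing
efficiency); returns the total amount assigned to each bin. -/
def algStarFillAux (d s : ℕ → ℝ) (n : ℕ) : List ℕ → (ℕ → ℝ) → ℕ → ℝ
  | [], _, _ => 0
  | i :: bins, rem, b =>
    let q := fillBin s n (d i) n (d i) rem
    if b = i then q.2 else algStarFillAux d s n bins q.1 b

/-- The total amount `ALG*` assigns to each bin, on the instance with bins `0,…,m-1`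
(in non-increasing order of efficiency) and items `0,…,n-1` (in non-increasing order of size). -/
def algStarFill (m n : ℕ) (d s : ℕ → ℝ) : ℕ → ℝ :=
  algStarFillAux d s n (List.range m) fun j => if j < n then s j else 0

/-- The modified profit `p*` of the solution produced by `ALG*`. -/
def algStarPStar (m n : ℕ) (d p s : ℕ → ℝ) : ℝ :=
  ∑ i ∈ Finset.range m, p i * min (algStarFill m n d s i / d i) 1

/-- The optimum of the linear program for the modified Bin Covering problem. -/
def LPOpt (m n : ℕ) (d p s : ℕ → ℝ) : ℝ :=
  sSup {v : ℝ | ∃ y : ℕ → ℝ, ∃ x : ℕ → ℕ → ℝ,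
    (∀ i < m, y i ≤ (∑ j ∈ Finset.range n, x j i) / d i) ∧
    (∀ j < n, ∑ i ∈ Finset.range m, x j i ≤ s j) ∧
    (∀ i, 0 ≤ y i ∧ y i ≤ 1) ∧
    (∀ j i, 0 ≤ x j i) ∧
    (∀ j < n, ∀ i < m, d i < s j → x j i = 0) ∧
    v = ∑ i ∈ Finset.range m, p i * y i}

/-- A solution of the modified Bin Covering problem, assigning item parts from the
finite set `P` (part `q ∈ P` belongs to item `itm q`) to the bins `0,…,m-1`;
a part may only be assigned to a bin to which its item is admissible. -/
def IsPartSolution (m : ℕ) (d s : ℕ → ℝ) (itm : ℕ → ℕ) (P : Finset ℕ) (S : ℕ → Finset ℕ) : Prop :=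
  (∀ i, S i ⊆ P) ∧ (Pairwise fun i i' => Disjoint (S i) (S i')) ∧
  (∀ i < m, ∀ q ∈ S i, s (itm q) ≤ d i) ∧ (∀ i, m ≤ i → S i = ∅)

/-- The modified profit `p*` of a solution, where `psz q` is the size of part `q`. -/
def pStarParts (m : ℕ) (d p psz : ℕ → ℝ) (S : ℕ → Finset ℕ) : ℝ :=
  ∑ i ∈ Finset.range m, p i * min ((∑ q ∈ S i, psz q) / d i) 1

/-- A solution of the modified Bin Covering problem is maximal if there are no two distinct
bins `i`, `i'` with `0 < s(S_i) < d_i`, `0 < s(S_i') < d_i'` and `e_i ≤ e_i'` such that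
some item of `S_i` is admissible to bin `i'`. -/
def MaximalMod (m : ℕ) (d p s : ℕ → ℝ) (S : ℕ → Finset ℕ) : Prop :=
  ¬ ∃ i i', i < m ∧ i' < m ∧ i ≠ i' ∧
      (0 < ∑ j ∈ S i, s j) ∧ (∑ j ∈ S i, s j) < d i ∧
      (0 < ∑ j ∈ S i', s j) ∧ (∑ j ∈ S i', s j) < d i' ∧
      p i / d i ≤ p i' / d i' ∧ ∃ j ∈ S i, s j ≤ d i'

/-- A solution induced by a matching in the bipartite graph on bins and items with an
edge `ij` whenever `s j > d i`: every bin receives at most one item, and any item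
assigned to a bin covers it singularly. -/
def IsMatchingSol (m n : ℕ) (d s : ℕ → ℝ) (S : ℕ → Finset ℕ) : Prop :=
  IsSolution (Finset.range n) S ∧ (∀ i, (S i).card ≤ 1) ∧ ∀ i < m, ∀ j ∈ S i, d i < s j

end BinCov

namespace BinCov

/-- Profit earned by NFD, computed recursively along the bin list. -/
def runProfit (d s : ℕ → ℝ) : List ℕ → List ℕ → ℝ
  | [], _ => 0
  | i :: bins, items =>
    if d i ≤ (items.map s).sum then
      d i + runProfit d s bins (takeFill s (d i) items).2
    else runProfit d s bins items

lemma takeFill_append (s : ℕ → ℝ) : ∀ (L : List ℕ) (D : ℝ),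
    (takeFill s D L).1 ++ (takeFill s D L).2 = L
  | [], _ => rfl
  | j :: rest, D => by
    rw [takeFill]
    split_ifs with h
    · rfl
    · simpa using takeFill_append s rest (D - s j)

lemma takeFill_sum (s : ℕ → ℝ) : ∀ (L : List ℕ) (D : ℝ),
    D ≤ (L.map s).sum → D ≤ ((takeFill s D L).1.map s).sum
  | [], D, h => by simpa [takeFill] using h
  | j :: rest, D, h => by
    rw [takeFill]
    split_ifs with hj
    · simpa using hj
    · have h' : D - s j ≤ (rest.map s).sum := by
        simp only [List.map_cons, List.sum_cons] at h; linarith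
      have := takeFill_sum s rest (D - s j) h'
      simp only [List.map_cons, List.sum_cons]
      linarith

lemma takeFill_filter_lt (s : ℕ → ℝ) : ∀ (L : List ℕ) (D : ℝ), 0 < D →
    L.Pairwise (· < ·) → ∀ x ∈ (takeFill s D L).1,
      ((((takeFill s D L).1).filter (fun k => decide (k < x))).map s).sum < D
  | [], D, hD, _, x, hx => by simp [takeFill] at hx
  | j :: rest, D, hD, hsort, x, hx => by
    rw [takeFill] at hx ⊢
    split_ifs at hx ⊢ with hj
    · simp only [List.mem_singleton] at hx
      subst hx
      simpa using hD
    · simp only [List.mem_cons] at hx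
      have hq := takeFill_append s rest (D - s j)
      have hmemrest : ∀ k ∈ (takeFill s (D - s j) rest).1, k ∈ rest := by
        intro k hk; rw [← hq]; exact List.mem_append_left _ hk
      rcases hx with hxj | hx
      · subst hxj
        have hnk : ∀ k ∈ (x :: (takeFill s (D - s x) rest).1), ¬ (k < x) := by
          intro k hk
          rcases List.mem_cons.mp hk with rfl | hk
          · omega
          · have : x < k := (List.pairwise_cons.mp hsort).1 k (hmemrest k hk)
            omega
        have hfil : (x :: (takeFill s (D - s x) rest).1).filter
            (fun k => decide (k < x)) = [] := by
          apply List.filter_eq_nil_iff.mpr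
          intro k hk
          simpa using hnk k hk
        simpa [hfil] using hD
      · have hjx : j < x := (List.pairwise_cons.mp hsort).1 x (hmemrest x hx)
        have hD' : 0 < D - s j := by
          push_neg at hj; linarith
        have IH := takeFill_filter_lt s rest (D - s j) hD'
          (List.pairwise_cons.mp hsort).2 x hx
        have hfil : (j :: (takeFill s (D - s j) rest).1).filter
            (fun k => decide (k < x)) =
            j :: ((takeFill s (D - s j) rest).1.filter (fun k => decide (k < x))) := by
          simp [List.filter_cons, hjx]
        rw [hfil]
        simp only [List.map_cons, List.sum_cons]
        linarith

/-- Sums of lists compare under set inclusion (for nodup lists with nonneg values). -/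
lemma list_sum_le (s : ℕ → ℝ) (l' l : List ℕ) (h' : l'.Nodup) (h : l.Nodup)
    (hsub : ∀ j ∈ l', j ∈ l) (hpos : ∀ j ∈ l, 0 ≤ s j) :
    (l'.map s).sum ≤ (l.map s).sum := by
  rw [← List.sum_toFinset s h', ← List.sum_toFinset s h]
  apply Finset.sum_le_sum_of_subset_of_nonneg
  · intro x hx
    simp only [List.mem_toFinset] at hx ⊢
    exact hsub x hx
  · intro x hx _
    exact hpos x (List.mem_toFinset.mp hx)

/-- Core lemma: on a larger item list, `takeFill` leaves a larger remainder. -/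
lemma takeFill_rest_subset (s : ℕ → ℝ) (L L' : List ℕ) (D : ℝ) (hD : 0 < D)
    (hL : L.Pairwise (· < ·)) (hL' : L'.Pairwise (· < ·)) (hsub : ∀ j ∈ L', j ∈ L)
    (hpos : ∀ j ∈ L, 0 < s j) (hsum' : D ≤ (L'.map s).sum) :
    ∀ j ∈ (takeFill s D L').2, j ∈ (takeFill s D L).2 := by
  intro j hj
  set P := (takeFill s D L).1 with hP
  set R := (takeFill s D L).2 with hR
  set P' := (takeFill s D L').1 with hP'
  set R' := (takeFill s D L').2 with hR'
  have happ : P ++ R = L := takeFill_append s L D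
  have happ' : P' ++ R' = L' := takeFill_append s L' D
  have hjL' : j ∈ L' := by rw [← happ']; exact List.mem_append_right _ hj
  have hjL : j ∈ L := hsub j hjL'
  rw [← happ] at hjL
  rcases List.mem_append.mp hjL with hjP | hjR
  · exfalso
    -- every element of P' lies in P and is < j
    have hLpw : L.Pairwise (· < ·) := hL
    rw [← happ] at hLpw
    have hPR : ∀ a ∈ P, ∀ b ∈ R, a < b := (List.pairwise_append.mp hLpw).2.2
    have hL'pw : L'.Pairwise (· < ·) := hL'
    rw [← happ'] at hL'pw
    have hP'R' : ∀ a ∈ P', ∀ b ∈ R', a < b := (List.pairwise_append.mp hL'pw).2.2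
    have hP'mem : ∀ p ∈ P', p ∈ P.filter (fun k => decide (k < j)) := by
      intro p hp
      have hpj : p < j := hP'R' p hp j hj
      have hpL : p ∈ L := hsub p (by rw [← happ']; exact List.mem_append_left _ hp)
      rw [← happ] at hpL
      rcases List.mem_append.mp hpL with hpP | hpR
      · simp only [List.mem_filter, decide_eq_true_eq]
        exact ⟨hpP, hpj⟩
      · exact absurd (hPR j hjP p hpR) (by omega)
    have hPnd : P.Nodup := by
      have : L.Nodup := hL.nodup
      rw [← happ] at this
      exact (List.nodup_append'.mp this).1
    have hP'nd : P'.Nodup := by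
      have : L'.Nodup := hL'.nodup
      rw [← happ'] at this
      exact (List.nodup_append'.mp this).1
    have hposP : ∀ k ∈ P.filter (fun k => decide (k < j)), 0 ≤ s k := by
      intro k hk
      have : k ∈ P := List.mem_of_mem_filter hk
      exact le_of_lt (hpos k (by rw [← happ]; exact List.mem_append_left _ this))
    have h1 : D ≤ (P'.map s).sum := takeFill_sum s L' D hsum'
    have h2 : (P'.map s).sum ≤ ((P.filter (fun k => decide (k < j))).map s).sum :=
      list_sum_le s P' _ hP'nd (hPnd.filter _) hP'mem hposP
    have h3 := takeFill_filter_lt s L D hD hL j hjP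
    rw [← hP] at h3
    linarith
  · exact hjR

lemma runProfit_nonneg (d s : ℕ → ℝ) : ∀ (bins : List ℕ),
    (∀ i ∈ bins, 0 ≤ d i) → ∀ items, 0 ≤ runProfit d s bins items
  | [], _, items => le_refl 0
  | i :: bins, hd, items => by
    have hdi : 0 ≤ d i := hd i List.mem_cons_self
    have hd' : ∀ i' ∈ bins, 0 ≤ d i' := fun i' h => hd i' (List.mem_cons_of_mem _ h)
    rw [runProfit]
    split_ifs with h
    · have := runProfit_nonneg d s bins hd' (takeFill s (d i) items).2
      linarith
    · exact runProfit_nonneg d s bins hd' items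

/-- The profit earned by NFD is at most the total size of the items. -/
lemma runProfit_le_sum (d s : ℕ → ℝ) : ∀ (bins : List ℕ) (items : List ℕ),
    (∀ j ∈ items, 0 ≤ s j) → runProfit d s bins items ≤ (items.map s).sum
  | [], items, hpos => by
    rw [runProfit]
    exact List.sum_nonneg (fun j hj => by
      rcases List.mem_map.mp hj with ⟨k, hk, rfl⟩
      exact hpos k hk)
  | i :: bins, items, hpos => by
    rw [runProfit]
    split_ifs with h
    · have happ := takeFill_append s items (d i)
      have hpos2 : ∀ j ∈ (takeFill s (d i) items).2, 0 ≤ s j := by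
        intro j hj
        exact hpos j (by rw [← happ]; exact List.mem_append_right _ hj)
      have IH := runProfit_le_sum d s bins (takeFill s (d i) items).2 hpos2
      have hsum : ((takeFill s (d i) items).1.map s).sum
          + ((takeFill s (d i) items).2.map s).sum = (items.map s).sum := by
        rw [← List.sum_append, ← List.map_append, happ]
      have h1 := takeFill_sum s items (d i) h
      linarith
    · exact runProfit_le_sum d s bins items hpos

/-- Monotonicity of the recursive profit in the item list. -/
lemma runProfit_mono (d s : ℕ → ℝ) : ∀ (bins : List ℕ),
    (∀ i ∈ bins, 0 < d i) → ∀ (L L' : List ℕ), L.Pairwise (· < ·) → L'.Pairwise (· < ·) →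
    (∀ j ∈ L, 0 < s j) → (∀ j ∈ L', j ∈ L) →
    runProfit d s bins L' ≤ runProfit d s bins L
  | [], _, L, L', _, _, _, _ => le_refl 0
  | i :: bins, hd, L, L', hL, hL', hpos, hsub => by
    have hdi : 0 < d i := hd i List.mem_cons_self
    have hd' : ∀ i' ∈ bins, 0 < d i' := fun i' h => hd i' (List.mem_cons_of_mem _ h)
    have hposL' : ∀ j ∈ L', 0 < s j := fun j hj => hpos j (hsub j hj)
    have hsumle : (L'.map s).sum ≤ (L.map s).sum :=
      list_sum_le s L' L hL'.nodup hL.nodup hsub (fun j hj => le_of_lt (hpos j hj))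
    rw [runProfit, runProfit]
    by_cases h' : d i ≤ (L'.map s).sum
    · -- both bins get covered
      have h : d i ≤ (L.map s).sum := le_trans h' hsumle
      rw [if_pos h', if_pos h]
      have happ := takeFill_append s L (d i)
      have happ' := takeFill_append s L' (d i)
      have hRs : (takeFill s (d i) L).2.Pairwise (· < ·) := by
        refine List.Pairwise.sublist ?_ hL
        have := List.sublist_append_right (takeFill s (d i) L).1 (takeFill s (d i) L).2
        rwa [happ] at this
      have hR's : (takeFill s (d i) L').2.Pairwise (· < ·) := by
        refine List.Pairwise.sublist ?_ hL'
        have := List.sublist_append_right (takeFill s (d i) L').1 (takeFill s (d i) L').2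
        rwa [happ'] at this
      have hRpos : ∀ j ∈ (takeFill s (d i) L).2, 0 < s j := by
        intro j hj
        exact hpos j (by rw [← happ]; exact List.mem_append_right _ hj)
      have hRsub := takeFill_rest_subset s L L' (d i) hdi hL hL' hsub hpos h'
      have := runProfit_mono d s bins hd' _ _ hRs hR's hRpos hRsub
      linarith
    · rw [if_neg h']
      split_ifs with h
      · -- L covers the bin, L' does not: switch to total-size bound
        push_neg at h'
        have h1 := runProfit_le_sum d s bins L' (fun j hj => le_of_lt (hposL' j hj))
        have h2 := runProfit_nonneg d s bins (fun i' h => le_of_lt (hd' i' h))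
          (takeFill s (d i) L).2
        linarith
      · exact runProfit_mono d s bins hd' L L' hL hL' hpos hsub

/-- `nfdAux` assigns nodup lists, and NFD's profit agrees with `runProfit`. -/
lemma profit_eq_runProfit (d s : ℕ → ℝ) : ∀ (bins : List ℕ), bins.Nodup →
    (∀ i ∈ bins, 0 < d i) → ∀ (items : List ℕ), items.Nodup →
    (bins.map (fun i => if d i ≤ ∑ j ∈ nfdAux d s bins items i, s j then d i else 0)).sum
      = runProfit d s bins items
  | [], _, _, items, _ => by simp [runProfit]
  | i :: bins, hnd, hd, items, hitems => by
    have hdi : 0 < d i := hd i List.mem_cons_self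
    have hd' : ∀ i' ∈ bins, 0 < d i' := fun i' h => hd i' (List.mem_cons_of_mem _ h)
    have hine : i ∉ bins := (List.nodup_cons.mp hnd).1
    have hnd' : bins.Nodup := (List.nodup_cons.mp hnd).2
    rw [runProfit, List.map_cons, List.sum_cons]
    by_cases h : d i ≤ (items.map s).sum
    · rw [if_pos h]
      set q := takeFill s (d i) items with hq
      have happ : q.1 ++ q.2 = items := takeFill_append s items (d i)
      have hq1nd : q.1.Nodup := by
        rw [← happ] at hitems
        exact (List.nodup_append'.mp hitems).1
      have hq2nd : q.2.Nodup := by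
        rw [← happ] at hitems
        exact (List.nodup_append'.mp hitems).2.1
      -- head term
      have hhead : nfdAux d s (i :: bins) items i = q.1.toFinset := by
        rw [nfdAux]; simp [h]; rfl
      have hsum1 : ∑ j ∈ q.1.toFinset, s j = (q.1.map s).sum := List.sum_toFinset s hq1nd
      have hcov : d i ≤ ∑ j ∈ nfdAux d s (i :: bins) items i, s j := by
        rw [hhead, hsum1]
        exact takeFill_sum s items (d i) h
      rw [if_pos hcov]
      -- tail terms
      have htail : ∀ b ∈ bins, nfdAux d s (i :: bins) items b = nfdAux d s bins q.2 b := by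
        intro b hb
        have hbne : b ≠ i := fun hbi => hine (hbi ▸ hb)
        rw [nfdAux]
        simp [h, hbne]; rfl
      have hmaps : (bins.map (fun b =>
          if d b ≤ ∑ j ∈ nfdAux d s (i :: bins) items b, s j then d b else 0)).sum
          = (bins.map (fun b =>
          if d b ≤ ∑ j ∈ nfdAux d s bins q.2 b, s j then d b else 0)).sum := by
        apply congrArg
        apply List.map_congr_left
        intro b hb
        rw [htail b hb]
      rw [hmaps, profit_eq_runProfit d s bins hnd' hd' q.2 hq2nd]
    · rw [if_neg h]
      have hhead : nfdAux d s (i :: bins) items i = ∅ := by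
        rw [nfdAux]; simp [h]
      have hncov : ¬ d i ≤ ∑ j ∈ nfdAux d s (i :: bins) items i, s j := by
        rw [hhead]
        simp only [Finset.sum_empty]
        linarith
      rw [if_neg hncov]
      have htail : ∀ b ∈ bins, nfdAux d s (i :: bins) items b = nfdAux d s bins items b := by
        intro b hb
        have hbne : b ≠ i := fun hbi => hine (hbi ▸ hb)
        rw [nfdAux]
        simp [h, hbne]
      have hmaps : (bins.map (fun b =>
          if d b ≤ ∑ j ∈ nfdAux d s (i :: bins) items b, s j then d b else 0)).sum
          = (bins.map (fun b =>
          if d b ≤ ∑ j ∈ nfdAux d s bins items b, s j then d b else 0)).sum := by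
        apply congrArg
        apply List.map_congr_left
        intro b hb
        rw [htail b hb]
      rw [hmaps, profit_eq_runProfit d s bins hnd' hd' items hitems, zero_add]

lemma finset_sum_sort (f : ℕ → ℝ) (B : Finset ℕ) :
    ∑ i ∈ B, f i = ((B.sort (· ≤ ·)).map f).sum := by
  conv_lhs => rw [← B.sort_toFinset (· ≤ ·)]
  exact List.sum_toFinset f (B.sort_nodup _)

lemma NFD_eq_runProfit (d s : ℕ → ℝ) (B T : Finset ℕ) (hd : ∀ i ∈ B, 0 < d i) :
    NFD d s B T = runProfit d s (B.sort (· ≤ ·)) (T.sort (· ≤ ·)) := by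
  rw [NFD, profit, nfdSol, finset_sum_sort]
  exact profit_eq_runProfit d s (B.sort (· ≤ ·)) (B.sort_nodup _)
    (fun i hi => hd i ((Finset.mem_sort _).mp hi)) (T.sort (· ≤ ·)) (T.sort_nodup _)

/- STATEMENT 18 -/
theorem stmt18 (d s : ℕ → ℝ) (B J J' : Finset ℕ)
    (hd : ∀ i ∈ B, 0 < d i) (hdm : ∀ i ∈ B, ∀ i' ∈ B, i ≤ i' → d i' ≤ d i)
    (hs : ∀ j ∈ J, 0 < s j) (hsm : ∀ j ∈ J, ∀ j' ∈ J, j ≤ j' → s j' ≤ s j)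
    (hsub : J' ⊆ J) :
    NFD d s B J' ≤ NFD d s B J := by
  rw [NFD_eq_runProfit d s B J hd, NFD_eq_runProfit d s B J' hd]
  apply runProfit_mono d s (B.sort (· ≤ ·))
    (fun i hi => hd i ((Finset.mem_sort _).mp hi))
  · exact J.sortedLT_sort.pairwise
  · exact J'.sortedLT_sort.pairwise
  · intro j hj
    exact hs j ((Finset.mem_sort _).mp hj)
  · intro j hj
    exact (Finset.mem_sort _).mpr (hsub ((Finset.mem_sort _).mp hj))

end BinCov
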